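/- Let V be a Kantor triple system with product (xyz). For any involutive automorphism Φ of V (a linear bijection with Φ² = id and Φ(xyz) = (Φx Φy Φz)), the modified product (xyz)_Φ := (x, Φ(y), z) again makes V a Kantor triple system. -/
import Mathlib


/-- The modified product `(xyz)_Φ = (x, Φ(y), z)`. -/
def modTrip {V : Type*} [AddCommGroup V] [Module ℂ V]
    (t : V →ₗ[ℂ] V →ₗ[ℂ] V →ₗ[ℂ] V) (Φ : V →ₗ[ℂ] V) (a b c : V) : V :=
  t a (Φ b) c

/-- The Kantor tensor of the modified product. -/
def modTripK {V : Type*} [AddCommGroup V] [Module ℂ V]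
    (t : V →ₗ[ℂ] V →ₗ[ℂ] V →ₗ[ℂ] V) (Φ : V →ₗ[ℂ] V) (a b c : V) : V :=
  modTrip t Φ a c b - modTrip t Φ b c a

/-- A modification `(xyz)_Φ := (x, Φ(y), z)` of a Kantor triple system by an
involutive automorphism `Φ` is again a Kantor triple system. -/
theorem modification_is_KTS
    {V : Type*} [AddCommGroup V] [Module ℂ V]
    (t : V →ₗ[ℂ] V →ₗ[ℂ] V →ₗ[ℂ] V)
    (ax1 : ∀ u v x y z : V,
      t u v (t x y z) = t (t u v x) y z - t x (t v u y) z + t x y (t u v z))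
    (ax2 : ∀ u v x y w : V,
      (t (t u x v - t v x u) w y - t y w (t u x v - t v x u))
        = (t (t y x u) w v - t v w (t y x u))
          - (t (t y x v) w u - t u w (t y x v)))
    (Φ : V →ₗ[ℂ] V)
    (hΦ2 : ∀ x : V, Φ (Φ x) = x)
    (hΦaut : ∀ x y z : V, Φ (t x y z) = t (Φ x) (Φ y) (Φ z)) :
    (∀ u v x y z : V,
      modTrip t Φ u v (modTrip t Φ x y z)
        = modTrip t Φ (modTrip t Φ u v x) y z
          - modTrip t Φ x (modTrip t Φ v u y) z
          + modTrip t Φ x y (modTrip t Φ u v z)) ∧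
    (∀ u v x y w : V,
      modTripK t Φ (modTripK t Φ u v x) y w
        = modTripK t Φ (modTrip t Φ y x u) v w
          - modTripK t Φ (modTrip t Φ y x v) u w) := by
  constructor
  · intro u v x y z
    simp only [modTrip, hΦaut, hΦ2]
    exact ax1 u (Φ v) x (Φ y) z
  · intro u v x y w
    simp only [modTripK, modTrip, map_sub, LinearMap.sub_apply]
    have h := ax2 u v (Φ x) y (Φ w)
    simp only [map_sub, LinearMap.sub_apply] at h
    exact h
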